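/- Let N = p_1^{n_1} ··· p_a^{n_a} with a ≥ 2. If N ≢ 2 (mod 4), then box(Γ(Z_N)) ≥ a. -/

import Mathlib

def IsIntervalGraph {V : Type*} (G : SimpleGraph V) : Prop :=
  ∃ a b : V → ℝ, ∀ u v : V, u ≠ v →
    (G.Adj u v ↔ (Set.Icc (a u) (b u) ∩ Set.Icc (a v) (b v)).Nonempty)

def IsThresholdGraph {V : Type*} (G : SimpleGraph V) : Prop :=
  ∃ (w : V → ℝ) (S : ℝ), ∀ u v : V, u ≠ v → (G.Adj u v ↔ S ≤ w u + w v)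

noncomputable def boxicity {V : Type*} (G : SimpleGraph V) : ℕ :=
  sInf {d : ℕ | ∃ I : Fin d → SimpleGraph V, (∀ i, IsIntervalGraph (I i)) ∧
    ∀ u v : V, G.Adj u v ↔ (u ≠ v ∧ ∀ i, (I i).Adj u v)}

noncomputable def thresholdDim {V : Type*} (G : SimpleGraph V) : ℕ :=
  sInf {d : ℕ | ∃ I : Fin d → SimpleGraph V, (∀ i, IsThresholdGraph (I i)) ∧
    ∀ u v : V, G.Adj u v ↔ (u ≠ v ∧ ∀ i, (I i).Adj u v)}

def zeroDivisorGraph (R : Type*) [CommRing R] :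
    SimpleGraph {x : R // x ≠ 0 ∧ ∃ y : R, y ≠ 0 ∧ x * y = 0} :=
  SimpleGraph.fromRel (fun a b => (a : R) * (b : R) = 0)

/-! Write `m i = N / p i ^ n i`. For `i ≠ j` the product `m i * m j` is divisible by `N`, while
`m i * (2 * m i)` is not, because `p i ^ n i ≠ 2` when `N % 4 ≠ 2`. Hence the vertices `m i` and
`2 * m i` of `Γ(ℤ_N)` induce the Roberts graph on `2a` vertices: the complete graph minus the
perfect matching `{m i, 2 * m i}`. In a box representation every non-edge `{m i, 2 * m i}` is missed
by some interval graph, and no interval graph can miss two of them, since together with the edges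
between them they would form an induced 4-cycle. So at least `a` interval graphs are needed. -/

open SimpleGraph Function

-- If both pairs were disjoint, say `b₁ < a₂` and `b₃ < a₄`, then `a₄ ≤ b₁ < a₂ ≤ b₃ < a₄`.
lemma Icc_inter_Icc_nonempty_or {a₁ b₁ a₂ b₂ a₃ b₃ a₄ b₄ : ℝ}
    (h₁₃ : (Set.Icc a₁ b₁ ∩ Set.Icc a₃ b₃).Nonempty)
    (h₁₄ : (Set.Icc a₁ b₁ ∩ Set.Icc a₄ b₄).Nonempty)
    (h₂₃ : (Set.Icc a₂ b₂ ∩ Set.Icc a₃ b₃).Nonempty)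
    (h₂₄ : (Set.Icc a₂ b₂ ∩ Set.Icc a₄ b₄).Nonempty) :
    (Set.Icc a₁ b₁ ∩ Set.Icc a₂ b₂).Nonempty ∨ (Set.Icc a₃ b₃ ∩ Set.Icc a₄ b₄).Nonempty := by
  simp only [Set.Icc_inter_Icc, Set.nonempty_Icc, sup_le_iff, le_inf_iff] at *
  by_contra! h
  grind

lemma isIntervalGraph_top_sdiff_edge {V : Type*} (s t : V) : IsIntervalGraph (⊤ \ edge s t) := by
  classical
  refine ⟨fun x => if x = t ∧ x ≠ s then 1 else 0, fun x => if x = s then 0 else 1,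
    fun u v huv => ?_⟩
  simp only [sdiff_adj, top_adj, edge_adj, Set.Icc_inter_Icc, Set.nonempty_Icc, sup_le_iff,
    le_inf_iff]
  split_ifs <;> grind

lemma IsIntervalGraph.comap {V W : Type*} {G : SimpleGraph W} (hG : IsIntervalGraph G) {f : V → W}
    (hf : Injective f) : IsIntervalGraph (G.comap f) := by
  obtain ⟨a, b, hab⟩ := hG
  exact ⟨a ∘ f, b ∘ f, fun u v huv => by simpa using hab _ _ (hf.ne huv)⟩

lemma IsIntervalGraph.adj_or_adj_of_cycle {V : Type*} {H : SimpleGraph V} (hH : IsIntervalGraph H)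
    {u v w z : V} (huv : u ≠ v) (hwz : w ≠ z) (huw : H.Adj u w) (huz : H.Adj u z)
    (hvw : H.Adj v w) (hvz : H.Adj v z) : H.Adj u v ∨ H.Adj w z := by
  obtain ⟨a, b, hab⟩ := hH
  rw [hab _ _ huv, hab _ _ hwz]
  exact Icc_inter_Icc_nonempty_or ((hab _ _ huw.ne).1 huw) ((hab _ _ huz.ne).1 huz)
    ((hab _ _ hvw.ne).1 hvw) ((hab _ _ hvz.ne).1 hvz)

def IsBoxRepresentation {V : Type*} (G : SimpleGraph V) {d : ℕ} (I : Fin d → SimpleGraph V) :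
    Prop :=
  (∀ k, IsIntervalGraph (I k)) ∧ ∀ u v : V, G.Adj u v ↔ (u ≠ v ∧ ∀ k, (I k).Adj u v)

lemma exists_isBoxRepresentation {V : Type*} [Finite V] (G : SimpleGraph V) :
    ∃ d, ∃ I : Fin d → SimpleGraph V, IsBoxRepresentation G I := by
  obtain ⟨d, ⟨σ⟩⟩ := Finite.exists_equiv_fin {p : V × V // ¬ G.Adj p.1 p.2}
  refine ⟨d, fun k => ⊤ \ edge (σ.symm k).1.1 (σ.symm k).1.2,
    fun k => isIntervalGraph_top_sdiff_edge _ _, fun u v => ⟨fun huv => ⟨huv.ne, fun k => ?_⟩, ?_⟩⟩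
  · have hk := (σ.symm k).2
    simp only [sdiff_adj, top_adj, edge_adj, huv.ne, ne_eq, not_false_eq_true, and_true, true_and]
    rintro (⟨rfl, rfl⟩ | ⟨rfl, rfl⟩)
    exacts [hk huv, hk huv.symm]
  · rintro ⟨huv, hI⟩
    by_contra hG
    simpa [edge_adj, huv] using hI (σ ⟨(u, v), hG⟩)

lemma boxicity_le_of_embedding {V W : Type*} [Finite W] {H : SimpleGraph V} {G : SimpleGraph W}
    (f : H ↪g G) : boxicity H ≤ boxicity G := by
  obtain ⟨I, hI, hGI⟩ := Nat.sInf_mem (exists_isBoxRepresentation G)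
  refine Nat.sInf_le ⟨fun k => (I k).comap f, fun k => (hI k).comap f.injective, fun u v => ?_⟩
  rw [← f.map_adj_iff, hGI, f.injective.ne_iff]
  rfl

def robertsGraph (ι : Type*) : SimpleGraph (ι × Bool) := (⊤ : SimpleGraph ι).comap Prod.fst

lemma card_le_boxicity_robertsGraph (ι : Type*) [Finite ι] :
    Nat.card ι ≤ boxicity (robertsGraph ι) := by
  refine le_csInf (exists_isBoxRepresentation _) ?_
  rintro d ⟨I, hI, hadj⟩
  have hmiss : ∀ i, ∃ k, ¬ (I k).Adj (i, false) (i, true) := by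
    intro i
    by_contra! h
    simpa [robertsGraph] using (hadj _ _).2 ⟨by simp, h⟩
  choose k hk using hmiss
  have hIadj : ∀ {i j : ι} (b b' : Bool) (l : Fin d), i ≠ j → (I l).Adj (i, b) (j, b') :=
    fun b b' l hij => ((hadj (_, b) (_, b')).1 (by simpa [robertsGraph] using hij)).2 l
  -- two pairs missed in the same coordinate would form an induced 4-cycle in an interval graph
  have hk_inj : Injective k := by
    intro i j hij
    by_contra hne
    exact ((hI (k i)).adj_or_adj_of_cycle (u := (i, false)) (v := (i, true)) (w := (j, false))
      (z := (j, true)) (by simp) (by simp) (hIadj _ _ _ hne) (hIadj _ _ _ hne) (hIadj _ _ _ hne)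
      (hIadj _ _ _ hne)).elim (hk i) (hij ▸ hk j)
  simpa using Nat.card_le_card_of_injective k hk_inj

section ZeroDivisorGraph

variable {R : Type*} [CommRing R]

lemma zeroDivisorGraph_adj {x y : {x : R // x ≠ 0 ∧ ∃ y : R, y ≠ 0 ∧ x * y = 0}} :
    (zeroDivisorGraph R).Adj x y ↔ x ≠ y ∧ (x : R) * y = 0 := by
  simp [zeroDivisorGraph, mul_comm (y : R)]

variable {ι : Type*} {e : ι → R}

variable (e) in
def robertsValue (v : ι × Bool) : R := cond v.2 2 1 * e v.1

lemma robertsValue_mul_eq_zero_iff (horth : Pairwise fun i j => e i * e j = 0)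
    (hdiag : ∀ i, e i * (2 * e i) ≠ 0) {u v : ι × Bool} (huv : u ≠ v) :
    robertsValue e u * robertsValue e v = 0 ↔ u.1 ≠ v.1 := by
  obtain ⟨i, b⟩ := u
  obtain ⟨j, b'⟩ := v
  refine ⟨fun h hij => ?_, fun hij => ?_⟩
  · dsimp only at hij
    subst hij
    cases b <;> cases b' <;> simp_all [robertsValue, mul_comm]
  · rw [robertsValue, robertsValue, mul_mul_mul_comm, horth hij, mul_zero]

lemma robertsValue_injective (horth : Pairwise fun i j => e i * e j = 0)
    (hdiag : ∀ i, e i * (2 * e i) ≠ 0) : Injective (robertsValue e) := by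
  rintro ⟨i, b⟩ ⟨j, b'⟩ h
  by_cases hij : i = j
  · subst hij
    have h2 : e i ≠ 2 * e i := fun h => left_ne_zero_of_mul (hdiag i) (by linear_combination -h)
    cases b <;> cases b' <;> simp_all [robertsValue, eq_comm]
  · have h₁ := (robertsValue_mul_eq_zero_iff horth hdiag (u := (i, b)) (v := (j, !b'))
      (by simp [hij])).2 hij
    have h₂ := (robertsValue_mul_eq_zero_iff horth hdiag (u := (j, b')) (v := (j, !b'))
      (by simp)).not.2 (by simp)
    exact absurd (h ▸ h₁) h₂

lemma robertsValue_ne_zero (hdiag : ∀ i, e i * (2 * e i) ≠ 0) (v : ι × Bool) :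
    robertsValue e v ≠ 0 := by
  obtain ⟨i, b⟩ := v
  cases b
  · simpa [robertsValue] using left_ne_zero_of_mul (hdiag i)
  · simpa [robertsValue] using right_ne_zero_of_mul (hdiag i)

lemma robertsValue_mem [Nontrivial ι] (horth : Pairwise fun i j => e i * e j = 0)
    (hdiag : ∀ i, e i * (2 * e i) ≠ 0) (v : ι × Bool) :
    robertsValue e v ≠ 0 ∧ ∃ y : R, y ≠ 0 ∧ robertsValue e v * y = 0 := by
  obtain ⟨j, hj⟩ := exists_ne v.1
  refine ⟨robertsValue_ne_zero hdiag v, robertsValue e (j, false), robertsValue_ne_zero hdiag _, ?_⟩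
  exact (robertsValue_mul_eq_zero_iff horth hdiag (by grind)).2 hj.symm

def robertsGraphEmbedding [Nontrivial ι] (horth : Pairwise fun i j => e i * e j = 0)
    (hdiag : ∀ i, e i * (2 * e i) ≠ 0) : robertsGraph ι ↪g zeroDivisorGraph R where
  toFun v := ⟨robertsValue e v, robertsValue_mem horth hdiag v⟩
  inj' u v h := robertsValue_injective horth hdiag (congrArg Subtype.val h)
  map_rel_iff' {u v} := by
    rw [zeroDivisorGraph_adj, robertsGraph, comap_adj, top_adj]
    by_cases huv : u = v
    · simp [huv]
    · refine (and_iff_right fun h => huv ?_).trans (robertsValue_mul_eq_zero_iff horth hdiag huv)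
      exact robertsValue_injective horth hdiag (congrArg Subtype.val h)

end ZeroDivisorGraph

lemma natCast_mul_two_mul_ne_zero {N q m : ℕ} (hN : N = q * m) (hq : 1 < q) (hqm : q.Coprime m)
    (hmod : N % 4 ≠ 2) : (m : ZMod N) * (2 * m) ≠ 0 := by
  intro h
  have hm : m ≠ 0 := by rintro rfl; simp_all
  have hdvd : q * m ∣ 2 * m * m := by
    rw [← hN, ← ZMod.natCast_eq_zero_iff]; push_cast; linear_combination h
  have hq2 : q = 2 := by
    have := hqm.dvd_of_dvd_mul_right ((Nat.mul_dvd_mul_iff_right (Nat.pos_of_ne_zero hm)).1 hdvd)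
    have := Nat.le_of_dvd two_pos this
    omega
  subst hq2
  obtain ⟨k, rfl⟩ := Nat.coprime_two_left.1 hqm
  omega

theorem stmt_10 (N a : ℕ) (p n : Fin a → ℕ) (ha : 2 ≤ a)
    (hp : ∀ i, (p i).Prime) (hmono : StrictMono p) (hn : ∀ i, 0 < n i)
    (hN : N = ∏ i, p i ^ n i) (hmod : N % 4 ≠ 2) :
    a ≤ boxicity (zeroDivisorGraph (ZMod N)) := by
  have : NeZero N := ⟨hN ▸ Finset.prod_ne_zero_iff.2 fun i _ => pow_ne_zero _ (hp i).ne_zero⟩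
  have : Nontrivial (Fin a) := Fin.nontrivial_iff_two_le.2 ha
  set m : Fin a → ℕ := fun i => ∏ j ∈ Finset.univ.erase i, p j ^ n j
  have hNm (i : Fin a) : N = p i ^ n i * m i :=
    hN ▸ (Finset.mul_prod_erase _ _ (Finset.mem_univ i)).symm
  have hcop (i : Fin a) : (p i ^ n i).Coprime (m i) := Nat.Coprime.prod_right fun j hj =>
    Nat.coprime_pow_primes _ _ (hp i) (hp j) (hmono.injective.ne (Finset.ne_of_mem_erase hj).symm)
  have horth : Pairwise fun i j => (m i : ZMod N) * m j = 0 := fun i j hij => by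
    change (m i : ZMod N) * m j = 0
    rw [← Nat.cast_mul, ZMod.natCast_eq_zero_iff, hNm j]
    exact mul_dvd_mul_right (Finset.dvd_prod_of_mem _ (Finset.mem_erase.2 ⟨hij.symm, by simp⟩)) _
  have hdiag (i : Fin a) : (m i : ZMod N) * (2 * m i) ≠ 0 :=
    natCast_mul_two_mul_ne_zero (hNm i) (Nat.one_lt_pow (hn i).ne' (hp i).one_lt) (hcop i) hmod
  calc a = Nat.card (Fin a) := (Nat.card_fin a).symm
    _ ≤ boxicity (robertsGraph (Fin a)) := card_le_boxicity_robertsGraph _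
    _ ≤ boxicity (zeroDivisorGraph (ZMod N)) :=
      boxicity_le_of_embedding (robertsGraphEmbedding horth hdiag)
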